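/- arXiv:2410.12002 — 4 statements merged into one kernel-verified Lean document; each statement's English description precedes it below -/
import Mathlib

section
/- Let D be a digraph on vertex set {1,…,n} and A ∈ Q(D). If A has the ASAP, then A has the Support Property: for every nonzero vector x with xᵀA = 0 and every nonzero vector y with Ay = 0, the supports of x and y touch, i.e., either supp(x) ∩ supp(y) ≠ ∅ or there is an arc in D from some vertex in supp(x) to some vertex in supp(y). -/
open Matrix

theorem asap_implies_support_property {n : ℕ} (D : Fin n → Fin n → Prop)
    (A : Matrix (Fin n) (Fin n) ℝ)
    (hQ : (∀ u, A u u ≠ 0) ∧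
      (∀ u w, u ≠ w → D u w → A u w ≠ 0) ∧
      (∀ u w, u ≠ w → ¬ D u w → A u w = 0))
    (hASAP : ∀ X : Matrix (Fin n) (Fin n) ℝ, X ⊙ A = 0 → Xᵀ * A = 0 → A * Xᵀ = 0 → X = 0) :
    ∀ x : Fin n → ℝ, x ≠ 0 → x ᵥ* A = 0 →
    ∀ y : Fin n → ℝ, y ≠ 0 → A *ᵥ y = 0 →
      (∃ i, x i ≠ 0 ∧ y i ≠ 0) ∨ (∃ i j, x i ≠ 0 ∧ y j ≠ 0 ∧ D i j) := by
  intro x hx hxA y hy hAy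
  by_contra hcon
  push_neg at hcon
  obtain ⟨h1, h2⟩ := hcon
  obtain ⟨hdiag, harc, hnoarc⟩ := hQ
  set X : Matrix (Fin n) (Fin n) ℝ := Matrix.of fun i j => x i * y j with hX
  have hHad : X ⊙ A = 0 := by
    ext i j
    simp only [Matrix.hadamard_apply, Matrix.zero_apply, hX, Matrix.of_apply]
    by_cases hxi : x i = 0
    · simp [hxi]
    by_cases hyj : y j = 0
    · simp [hyj]
    have hij : i ≠ j := by
      intro h; subst h; exact hyj (h1 i hxi)
    have : ¬ D i j := fun hd => absurd (h2 i j) (by simp [hxi, hyj, hd])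
    rw [hnoarc i j hij this]; ring
  have hL : Xᵀ * A = 0 := by
    ext i j
    simp only [Matrix.mul_apply, Matrix.transpose_apply, Matrix.zero_apply, hX, Matrix.of_apply]
    have := congrFun hxA j
    simp only [Matrix.vecMul, dotProduct, Pi.zero_apply] at this
    calc ∑ u, x u * y i * A u j = y i * ∑ u, x u * A u j := by
          rw [Finset.mul_sum]; congr 1; ext u; ring
      _ = 0 := by rw [this]; ring
  have hR : A * Xᵀ = 0 := by
    ext i j
    simp only [Matrix.mul_apply, Matrix.transpose_apply, Matrix.zero_apply, hX, Matrix.of_apply]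
    have := congrFun hAy i
    simp only [Matrix.mulVec, dotProduct, Pi.zero_apply] at this
    calc ∑ u, A i u * (x j * y u) = x j * ∑ u, A i u * y u := by
          rw [Finset.mul_sum]; congr 1; ext u; ring
      _ = 0 := by rw [this]; ring
  have hX0 := hASAP X hHad hL hR
  obtain ⟨i, hxi⟩ := Function.ne_iff.mp hx
  obtain ⟨j, hyj⟩ := Function.ne_iff.mp hy
  have : X i j = 0 := by rw [hX0]; rfl
  simp only [hX, Matrix.of_apply] at this
  exact (mul_ne_zero hxi hyj) this
end

section
/- Let D be a digraph on {1,…,n}, u a vertex of outdegree 1 with outgoing arc u→v, and A ∈ Q⁰(D) with a_{u,u} ≠ 0 and a_{u,v} ≠ 0. If A has the Support Property with respect to D, then the Schur complement A/A[u] lies in Q⁰(D/uv) (where D/uv is the digraph obtained by contracting the arc u→v), has the same nullity as A, and has the Support Property with respect to D/uv. -/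
open Matrix

namespace SchurAux

variable {n : ℕ}

/-- split a sum over `Fin n` at `u` -/
lemma sum_split (u : Fin n) (f : Fin n → ℝ) :
    ∑ i, f i = f u + ∑ i : {i : Fin n // i ≠ u}, f i := by
  classical
  rw [Fintype.sum_eq_add_sum_compl u f]
  congr 1
  exact (Finset.sum_subtype ({u}ᶜ) (by simp) f)

/-- The Schur complement matrix. -/
noncomputable def schurC (u : Fin n) (A : Matrix (Fin n) (Fin n) ℝ) :
    Matrix {i : Fin n // i ≠ u} {i : Fin n // i ≠ u} ℝ :=
  Matrix.of fun i j : {i : Fin n // i ≠ u} => A i j - A i u * (A u u)⁻¹ * A u j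

lemma schurC_apply (u : Fin n) (A : Matrix (Fin n) (Fin n) ℝ)
    (i j : {i : Fin n // i ≠ u}) :
    schurC u A i j = A i j - A i u * (A u u)⁻¹ * A u j := rfl

lemma schurC_transpose (u : Fin n) (A : Matrix (Fin n) (Fin n) ℝ) :
    (schurC u A)ᵀ = schurC u Aᵀ := by
  ext i j
  simp [schurC, transpose_apply]
  ring

/-- The extension of a vector on `{i // i ≠ u}` to `Fin n`. -/
noncomputable def extR (u : Fin n) (A : Matrix (Fin n) (Fin n) ℝ)
    (y : {i : Fin n // i ≠ u} → ℝ) : Fin n → ℝ :=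
  fun i => if h : i = u then -((A u u)⁻¹ * ∑ j : {i : Fin n // i ≠ u}, A u j * y j)
           else y ⟨i, h⟩

lemma extR_u (u : Fin n) (A : Matrix (Fin n) (Fin n) ℝ) (y) :
    extR u A y u = -((A u u)⁻¹ * ∑ j : {i : Fin n // i ≠ u}, A u j * y j) := by
  simp [extR]

lemma extR_ne (u : Fin n) (A : Matrix (Fin n) (Fin n) ℝ) (y) (i : Fin n) (h : i ≠ u) :
    extR u A y i = y ⟨i, h⟩ := by
  simp [extR, h]

lemma extR_coe (u : Fin n) (A : Matrix (Fin n) (Fin n) ℝ) (y)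
    (j : {i : Fin n // i ≠ u}) : extR u A y j = y j := by
  rw [extR_ne u A y j j.2]

lemma mulVec_extR_u (u : Fin n) (A : Matrix (Fin n) (Fin n) ℝ)
    (hAuu : A u u ≠ 0) (y : {i : Fin n // i ≠ u} → ℝ) :
    (A *ᵥ extR u A y) u = 0 := by
  have : (A *ᵥ extR u A y) u = ∑ j, A u j * extR u A y j := rfl
  rw [this, sum_split u (fun j => A u j * extR u A y j)]
  simp only [extR_u, extR_coe]
  field_simp
  ring

lemma mulVec_extR_ne (u : Fin n) (A : Matrix (Fin n) (Fin n) ℝ)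
    (y : {i : Fin n // i ≠ u} → ℝ) (i : Fin n) (hi : i ≠ u) :
    (A *ᵥ extR u A y) i = (schurC u A *ᵥ y) ⟨i, hi⟩ := by
  have h1 : (A *ᵥ extR u A y) i = ∑ j, A i j * extR u A y j := rfl
  have h2 : (schurC u A *ᵥ y) ⟨i, hi⟩
      = ∑ j : {i : Fin n // i ≠ u}, (A i j - A i u * (A u u)⁻¹ * A u j) * y j := rfl
  rw [h1, h2, sum_split u (fun j => A i j * extR u A y j)]
  simp only [extR_u, extR_coe, sub_mul, Finset.sum_sub_distrib, mul_neg, Finset.mul_sum]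
  have e : ∀ j : {i : Fin n // i ≠ u},
      A i u * ((A u u)⁻¹ * (A u ↑j * y j)) = A i u * (A u u)⁻¹ * A u ↑j * y j :=
    fun j => by ring
  rw [Finset.sum_congr rfl (fun j _ => e j)]
  ring

/-- a null vector of `A` is the extension of its restriction -/
lemma extR_res (u : Fin n) (A : Matrix (Fin n) (Fin n) ℝ) (hAuu : A u u ≠ 0)
    (z : Fin n → ℝ) (hz : A *ᵥ z = 0) :
    extR u A (fun j : {i : Fin n // i ≠ u} => z j) = z := by
  funext i
  by_cases h : i = u
  · subst h
    rw [extR_u]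
    have h0 : ∑ j, A i j * z j = 0 := congrFun hz i
    rw [sum_split i (fun j => A i j * z j)] at h0
    have : A i i * z i = - ∑ j : {j : Fin n // j ≠ i}, A i j * z j := by linarith
    field_simp
    linarith [this]
  · rw [extR_ne u A _ i h]


/-- `extR` as a linear map. -/
noncomputable def extLin (u : Fin n) (A : Matrix (Fin n) (Fin n) ℝ) :
    ({i : Fin n // i ≠ u} → ℝ) →ₗ[ℝ] (Fin n → ℝ) where
  toFun := extR u A
  map_add' y z := by
    funext i
    by_cases h : i = u
    · subst h
      simp only [Pi.add_apply, extR_u, Pi.add_apply, mul_add, Finset.sum_add_distrib]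
      ring
    · simp [extR_ne _ _ _ i h]
  map_smul' c y := by
    funext i
    by_cases h : i = u
    · subst h
      simp only [Pi.smul_apply, extR_u, smul_eq_mul, RingHom.id_apply]
      have e : ∑ j : {i' : Fin n // i' ≠ i}, A i ↑j * (c * y j)
          = c * ∑ j : {i' : Fin n // i' ≠ i}, A i ↑j * y j := by
        rw [Finset.mul_sum]; exact Finset.sum_congr rfl (fun j _ => by ring)
      rw [e]; ring
    · simp [extR_ne _ _ _ i h]

lemma finrank_ker_eq (u : Fin n) (A : Matrix (Fin n) (Fin n) ℝ) (hAuu : A u u ≠ 0) :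
    Module.finrank ℝ (LinearMap.ker (schurC u A).mulVecLin) =
      Module.finrank ℝ (LinearMap.ker A.mulVecLin) := by
  have hE : ∀ z ∈ LinearMap.ker (schurC u A).mulVecLin,
      extLin u A z ∈ LinearMap.ker A.mulVecLin := by
    intro z hz
    rw [LinearMap.mem_ker] at hz ⊢
    rw [mulVecLin_apply] at hz ⊢
    funext i
    simp only [Pi.zero_apply]
    by_cases h : i = u
    · subst h
      exact mulVec_extR_u i A hAuu z
    · rw [show (extLin u A) z = extR u A z from rfl, mulVec_extR_ne u A z i h, hz]
      rfl
  have hR : ∀ z ∈ LinearMap.ker A.mulVecLin,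
      (LinearMap.funLeft ℝ ℝ (Subtype.val : {i : Fin n // i ≠ u} → Fin n)) z ∈
        LinearMap.ker (schurC u A).mulVecLin := by
    intro z hz
    rw [LinearMap.mem_ker] at hz ⊢
    rw [mulVecLin_apply] at hz ⊢
    funext j
    have h1 := (mulVec_extR_ne u A (fun j : {i : Fin n // i ≠ u} => z ↑j) ↑j j.2).symm
    rw [extR_res u A hAuu z hz] at h1
    have h2 : (⟨(↑j : Fin n), j.2⟩ : {i : Fin n // i ≠ u}) = j := rfl
    rw [h2] at h1
    rw [show (LinearMap.funLeft ℝ ℝ (Subtype.val : {i : Fin n // i ≠ u} → Fin n)) z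
        = fun j : {i : Fin n // i ≠ u} => z ↑j from rfl]
    rw [h1, hz]
    rfl
  refine LinearEquiv.finrank_eq
    (LinearEquiv.ofLinear ((extLin u A).restrict hE)
      ((LinearMap.funLeft ℝ ℝ Subtype.val).restrict hR) ?_ ?_)
  · ext z
    have hz : A *ᵥ (z : Fin n → ℝ) = 0 := by
      have := z.2; rw [LinearMap.mem_ker, mulVecLin_apply] at this; exact this
    exact congrFun (extR_res u A hAuu (z : Fin n → ℝ) hz) _
  · ext y j
    exact extR_coe u A (y : {i : Fin n // i ≠ u} → ℝ) j

end SchurAux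

open SchurAux in
theorem schur_contraction_preserves {n : ℕ} (D : Fin n → Fin n → Prop)
    (u v : Fin n) (huv : D u v) (hout : ∀ w, D u w → w = v)
    (A : Matrix (Fin n) (Fin n) ℝ)
    (hQ0 : ∀ i j, i ≠ j → ¬ D i j → A i j = 0)
    (hAuu : A u u ≠ 0) (hAuv : A u v ≠ 0)
    (hSP : ∀ x : Fin n → ℝ, x ≠ 0 → x ᵥ* A = 0 →
      ∀ y : Fin n → ℝ, y ≠ 0 → A *ᵥ y = 0 →
        (∃ i, x i ≠ 0 ∧ y i ≠ 0) ∨ (∃ i j, x i ≠ 0 ∧ y j ≠ 0 ∧ D i j)) :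
    -- the Schur complement A/A[u]
    (∀ i j : {i : Fin n // i ≠ u}, i ≠ j →
      ¬ ((i : Fin n) ≠ (j : Fin n) ∧ (D i j ∨ ((j : Fin n) = v ∧ D i u))) →
      (Matrix.of fun i j : {i : Fin n // i ≠ u} =>
        A i j - A i u * (A u u)⁻¹ * A u j) i j = 0) ∧
    Module.finrank ℝ (LinearMap.ker (Matrix.mulVecLin
      (Matrix.of fun i j : {i : Fin n // i ≠ u} =>
        A i j - A i u * (A u u)⁻¹ * A u j))) =
      Module.finrank ℝ (LinearMap.ker (Matrix.mulVecLin A)) ∧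
    (∀ x : {i : Fin n // i ≠ u} → ℝ, x ≠ 0 →
      x ᵥ* (Matrix.of fun i j : {i : Fin n // i ≠ u} =>
        A i j - A i u * (A u u)⁻¹ * A u j) = 0 →
      ∀ y : {i : Fin n // i ≠ u} → ℝ, y ≠ 0 →
      (Matrix.of fun i j : {i : Fin n // i ≠ u} =>
        A i j - A i u * (A u u)⁻¹ * A u j) *ᵥ y = 0 →
        (∃ i, x i ≠ 0 ∧ y i ≠ 0) ∨
        (∃ i j : {i : Fin n // i ≠ u}, x i ≠ 0 ∧ y j ≠ 0 ∧
          (i : Fin n) ≠ (j : Fin n) ∧ (D i j ∨ ((j : Fin n) = v ∧ D i u)))) := by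
  classical
  refine ⟨?_, ?_, ?_⟩
  · -- Q⁰ membership
    intro i j hij hnot
    have hne : (↑i : Fin n) ≠ ↑j := fun h => hij (Subtype.ext h)
    rw [not_and] at hnot
    obtain ⟨hD1, hD2⟩ := not_or.mp (hnot hne)
    show A ↑i ↑j - A ↑i u * (A u u)⁻¹ * A u ↑j = 0
    have hAij : A ↑i ↑j = 0 := hQ0 _ _ hne hD1
    by_cases hjv : (↑j : Fin n) = v
    · have hDiu : ¬ D ↑i u := fun h => hD2 ⟨hjv, h⟩
      have hAiu : A ↑i u = 0 := hQ0 _ _ i.2 hDiu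
      rw [hAij, hAiu]; ring
    · have hDuj : ¬ D u ↑j := fun h => hjv (hout _ h)
      have hAuj : A u ↑j = 0 := hQ0 _ _ (Ne.symm j.2) hDuj
      rw [hAij, hAuj]; ring
  · exact finrank_ker_eq u A hAuu
  · intro x hx hxB y hy hBy
    -- convert hypotheses to statements about schurC
    have hxB' : schurC u Aᵀ *ᵥ x = 0 := by
      rw [← schurC_transpose, mulVec_transpose]
      exact hxB
    have hBy' : schurC u A *ᵥ y = 0 := hBy
    set xh : Fin n → ℝ := extR u Aᵀ x with hxh
    set yh : Fin n → ℝ := extR u A y with hyh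
    have hAuuT : Aᵀ u u ≠ 0 := hAuu
    have hyh0 : A *ᵥ yh = 0 := by
      funext i
      simp only [Pi.zero_apply]
      by_cases h : i = u
      · subst h; exact mulVec_extR_u i A hAuu y
      · rw [hyh, mulVec_extR_ne u A y i h, hBy']; rfl
    have hxh0 : xh ᵥ* A = 0 := by
      rw [← mulVec_transpose]
      funext i
      simp only [Pi.zero_apply]
      by_cases h : i = u
      · subst h; exact mulVec_extR_u i Aᵀ hAuuT x
      · rw [hxh, mulVec_extR_ne u Aᵀ x i h, hxB']; rfl
    have hxhne : xh ≠ 0 := by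
      obtain ⟨j, hj⟩ := Function.ne_iff.mp hx
      intro h0
      apply hj
      have := congrFun h0 (↑j : Fin n)
      rwa [hxh, extR_coe] at this
    have hyhne : yh ≠ 0 := by
      obtain ⟨j, hj⟩ := Function.ne_iff.mp hy
      intro h0
      apply hj
      have := congrFun h0 (↑j : Fin n)
      rwa [hyh, extR_coe] at this
    -- key facts
    have factR : yh u ≠ 0 → ∃ hv : v ≠ u, y ⟨v, hv⟩ ≠ 0 := by
      intro hne
      rw [hyh, extR_u] at hne
      have hs : ∑ j : {i : Fin n // i ≠ u}, A u ↑j * y j ≠ 0 := by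
        intro h0; apply hne; rw [h0]; ring
      obtain ⟨j, _, hj⟩ := Finset.exists_ne_zero_of_sum_ne_zero hs
      have hAuj : A u ↑j ≠ 0 := fun h => hj (by rw [h]; ring)
      have hyj : y j ≠ 0 := fun h => hj (by rw [h]; ring)
      have hDuj : D u ↑j := by
        by_contra hc
        exact hAuj (hQ0 _ _ (Ne.symm j.2) hc)
      have hjv : (↑j : Fin n) = v := hout _ hDuj
      refine ⟨hjv ▸ j.2, ?_⟩
      rw [show (⟨v, hjv ▸ j.2⟩ : {i : Fin n // i ≠ u}) = j from Subtype.ext hjv.symm]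
      exact hyj
    have factL : xh u ≠ 0 → ∃ i : {i : Fin n // i ≠ u}, x i ≠ 0 ∧ D ↑i u := by
      intro hne
      rw [hxh, extR_u] at hne
      have hs : ∑ j : {i : Fin n // i ≠ u}, Aᵀ u ↑j * x j ≠ 0 := by
        intro h0; apply hne; rw [h0]; ring
      obtain ⟨j, _, hj⟩ := Finset.exists_ne_zero_of_sum_ne_zero hs
      have hAju : A ↑j u ≠ 0 := fun h => hj (by rw [transpose_apply, h]; ring)
      have hxj : x j ≠ 0 := fun h => hj (by rw [h]; ring)
      have hDju : D ↑j u := by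
        by_contra hc
        exact hAju (hQ0 _ _ j.2 hc)
      exact ⟨j, hxj, hDju⟩
    -- two step lemmas
    have step : ∀ i' : {i : Fin n // i ≠ u}, x i' ≠ 0 → D ↑i' u →
        ∀ hv : v ≠ u, y ⟨v, hv⟩ ≠ 0 →
        (∃ i, x i ≠ 0 ∧ y i ≠ 0) ∨
        (∃ i j : {i : Fin n // i ≠ u}, x i ≠ 0 ∧ y j ≠ 0 ∧
          (i : Fin n) ≠ (j : Fin n) ∧ (D i j ∨ ((j : Fin n) = v ∧ D i u))) := by
      intro i' hx' hD' hv hy'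
      by_cases h : (↑i' : Fin n) = v
      · exact Or.inl ⟨i', hx', by rw [show i' = ⟨v, hv⟩ from Subtype.ext h]; exact hy'⟩
      · exact Or.inr ⟨i', ⟨v, hv⟩, hx', hy', h, Or.inr ⟨rfl, hD'⟩⟩
    have step2 : ∀ i' j' : {i : Fin n // i ≠ u}, x i' ≠ 0 → y j' ≠ 0 → D ↑i' ↑j' →
        (∃ i, x i ≠ 0 ∧ y i ≠ 0) ∨
        (∃ i j : {i : Fin n // i ≠ u}, x i ≠ 0 ∧ y j ≠ 0 ∧
          (i : Fin n) ≠ (j : Fin n) ∧ (D i j ∨ ((j : Fin n) = v ∧ D i u))) := by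
      intro i' j' hx' hy' hD'
      by_cases h : i' = j'
      · exact Or.inl ⟨i', hx', h ▸ hy'⟩
      · exact Or.inr ⟨i', j', hx', hy', fun hc => h (Subtype.ext hc), Or.inl hD'⟩
    rcases hSP xh hxhne hxh0 yh hyhne hyh0 with ⟨i, hxi, hyi⟩ | ⟨i, j, hxi, hyj, hDij⟩
    · by_cases h : i = u
      · rw [h] at hxi hyi
        obtain ⟨i', hx', hD'⟩ := factL hxi
        obtain ⟨hv, hy'⟩ := factR hyi
        exact step i' hx' hD' hv hy'
      · refine Or.inl ⟨⟨i, h⟩, ?_, ?_⟩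
        · rwa [hxh, extR_ne u Aᵀ x i h] at hxi
        · rwa [hyh, extR_ne u A y i h] at hyi
    · by_cases hi : i = u <;> by_cases hj : j = u
      · rw [hi] at hxi; rw [hj] at hyj
        obtain ⟨i', hx', hD'⟩ := factL hxi
        obtain ⟨hv, hy'⟩ := factR hyj
        exact step i' hx' hD' hv hy'
      · rw [hi] at hxi hDij
        obtain ⟨i', hx', hD'⟩ := factL hxi
        have hjv : j = v := hout _ hDij
        have hv : v ≠ u := hjv ▸ hj
        have hy' : y ⟨v, hv⟩ ≠ 0 := by
          rw [hyh, extR_ne u A y j hj] at hyj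
          rwa [show (⟨v, hv⟩ : {i : Fin n // i ≠ u}) = ⟨j, hj⟩ from Subtype.ext hjv.symm]
        exact step i' hx' hD' hv hy'
      · rw [hj] at hyj hDij
        obtain ⟨hv, hy'⟩ := factR hyj
        have hx' : x ⟨i, hi⟩ ≠ 0 := by rwa [hxh, extR_ne u Aᵀ x i hi] at hxi
        exact step ⟨i, hi⟩ hx' hDij hv hy'
      · have hx' : x ⟨i, hi⟩ ≠ 0 := by rwa [hxh, extR_ne u Aᵀ x i hi] at hxi
        have hy' : y ⟨j, hj⟩ ≠ 0 := by rwa [hyh, extR_ne u A y j hj] at hyj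
        exact step2 ⟨i, hi⟩ ⟨j, hj⟩ hx' hy' hDij
end

section
/- Let D be a digraph on {1,…,n}, u a vertex of outdegree 1 with outgoing arc u→v, and A ∈ Q⁰(D) with a_{u,u} = 0 and a_{u,v} ≠ 0. Then the matrix A(u,v) obtained by deleting row u and column v equals the Schur complement A/A[u,v], and its nullity equals the nullity of A. -/
/-!
Since `u` has outdegree 1 and `a_{u,u} = 0`, row `u` of `A` is `a_{u,v} e_v`, which is what makes
`A(u,v)` coincide with the Schur complement. Because `a_{u,v} ≠ 0`, every kernel vector of `A`
vanishes at `v`, so restriction maps `ker A` isomorphically onto the kernel of `A` with column `v`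
deleted; in that matrix row `u` is zero, and deleting it does not change the kernel.
-/

open Matrix

namespace Matrix

variable {R K m n : Type*} [Fintype n]

theorem mulVec_eq_submatrix_mulVec_of_apply_eq_zero [DecidableEq n] [NonUnitalNonAssocSemiring R]
    (A : Matrix m n R) {x : n → R} {v : n} (hx : x v = 0) :
    A *ᵥ x = A.submatrix id (Subtype.val : {j // j ≠ v} → n) *ᵥ fun j => x j := by
  ext i
  simp only [mulVec, dotProduct, Fintype.sum_eq_add_sum_subtype_ne _ v, hx, mul_zero, zero_add]
  rfl

theorem apply_eq_zero_of_mulVec_eq_zero [NonUnitalNonAssocSemiring R] [NoZeroDivisors R]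
    {A : Matrix m n R} {u : m} {v : n} (hrow : ∀ j, j ≠ v → A u j = 0) (hAuv : A u v ≠ 0)
    {x : n → R} (hx : A *ᵥ x = 0) : x v = 0 := by
  have hu : A u v * x v = 0 := calc
    A u v * x v = (A *ᵥ x) u :=
      (Fintype.sum_eq_single (f := fun j => A u j * x j) v fun j hj => by
        rw [hrow j hj, zero_mul]).symm
    _ = 0 := by rw [hx, Pi.zero_apply]
  exact (mul_eq_zero.mp hu).resolve_left hAuv

theorem ker_mulVecLin_submatrix_of_row_eq_zero [CommSemiring R]
    {A : Matrix m n R} {u : m} (hrow : ∀ j, A u j = 0) :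
    LinearMap.ker (A.submatrix (Subtype.val : {i // i ≠ u} → m) id).mulVecLin =
      LinearMap.ker A.mulVecLin := by
  ext x
  have hu : (A *ᵥ x) u = 0 := by simp [mulVec, dotProduct, hrow]
  simp only [LinearMap.mem_ker, mulVecLin_apply, funext_iff, Pi.zero_apply]
  refine ⟨fun h i => ?_, fun h i => h i⟩
  by_cases hi : i = u
  · exact hi ▸ hu
  · exact h ⟨i, hi⟩

theorem finrank_ker_mulVecLin_submatrix_col [DecidableEq n] [Field K] {A : Matrix m n K}
    {u : m} {v : n} (hrow : ∀ j, j ≠ v → A u j = 0) (hAuv : A u v ≠ 0) :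
    Module.finrank K (LinearMap.ker (A.submatrix id (Subtype.val : {j // j ≠ v} → n)).mulVecLin) =
      Module.finrank K (LinearMap.ker A.mulVecLin) := by
  set A' := A.submatrix id (Subtype.val : {j // j ≠ v} → n)
  have hvanish : ∀ x ∈ LinearMap.ker A.mulVecLin, x v = 0 := fun x hx =>
    apply_eq_zero_of_mulVec_eq_zero hrow hAuv hx
  let restrict : LinearMap.ker A.mulVecLin →ₗ[K] LinearMap.ker A'.mulVecLin :=
    LinearMap.codRestrict _
      ((LinearMap.funLeft K K Subtype.val).comp (LinearMap.ker A.mulVecLin).subtype)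
      fun x => by
        have hx : A *ᵥ (x : n → K) = 0 := x.2
        rwa [mulVec_eq_submatrix_mulVec_of_apply_eq_zero A (hvanish x x.2)] at hx
  have hinj : Function.Injective restrict := by
    intro x y hxy
    ext j
    by_cases hj : j = v
    · rw [hj, hvanish x x.2, hvanish y y.2]
    · exact congrFun (congrArg Subtype.val hxy) ⟨j, hj⟩
  have hsurj : Function.Surjective restrict := by
    intro y
    set x : n → K := Function.extend Subtype.val (y : {j // j ≠ v} → K) 0
    have hxv : x v = 0 := Function.extend_apply' _ _ _ fun ⟨j, hj⟩ => j.2 hj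
    have hxy : (fun j : {j // j ≠ v} => x j) = y :=
      funext (Subtype.val_injective.extend_apply _ _)
    have hx : A *ᵥ x = 0 := by
      rw [mulVec_eq_submatrix_mulVec_of_apply_eq_zero A hxv, hxy]
      exact y.2
    exact ⟨⟨x, hx⟩, Subtype.ext hxy⟩
  exact (LinearEquiv.ofBijective restrict ⟨hinj, hsurj⟩).finrank_eq.symm

end Matrix

theorem delete_row_col_eq_schur_general {n : ℕ} (D : Fin n → Fin n → Prop)
    (u v : Fin n) (hout : ∀ w, D u w → w = v)
    (A : Matrix (Fin n) (Fin n) ℝ)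
    (hQ0 : ∀ i j, i ≠ j → ¬ D i j → A i j = 0)
    (hAuu : A u u = 0) (hAuv : A u v ≠ 0) :
    (A.submatrix (fun i : {i : Fin n // i ≠ u} => (i : Fin n))
        (fun j : {j : Fin n // j ≠ v} => (j : Fin n)) =
      Matrix.of fun (i : {i : Fin n // i ≠ u}) (j : {j : Fin n // j ≠ v}) =>
        A i j - A i v * (A u v)⁻¹ * A u j) ∧
    Module.finrank ℝ (LinearMap.ker (Matrix.mulVecLin
      (A.submatrix (fun i : {i : Fin n // i ≠ u} => (i : Fin n))
        (fun j : {j : Fin n // j ≠ v} => (j : Fin n))))) =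
      Module.finrank ℝ (LinearMap.ker (Matrix.mulVecLin A)) := by
  have hrow : ∀ j, j ≠ v → A u j = 0 := by
    intro j hj
    by_cases hju : j = u
    · exact hju ▸ hAuu
    · exact hQ0 u j (Ne.symm hju) fun h => hj (hout j h)
  refine ⟨?_, ?_⟩
  · ext i j
    simp [hrow j j.2]
  · let A' := A.submatrix id (Subtype.val : {j // j ≠ v} → Fin n)
    have hrow' : ∀ j, A' u j = 0 := fun j => hrow j j.2
    calc _ = Module.finrank ℝ (LinearMap.ker A'.mulVecLin) := by
          rw [← ker_mulVecLin_submatrix_of_row_eq_zero hrow']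
          rfl
      _ = _ := finrank_ker_mulVecLin_submatrix_col hrow hAuv

theorem delete_row_col_eq_schur {n : ℕ} (D : Fin n → Fin n → Prop)
    (u v : Fin n) (huv : D u v) (hout : ∀ w, D u w → w = v)
    (A : Matrix (Fin n) (Fin n) ℝ)
    (hQ0 : ∀ i j, i ≠ j → ¬ D i j → A i j = 0)
    (hAuu : A u u = 0) (hAuv : A u v ≠ 0) :
    (A.submatrix (fun i : {i : Fin n // i ≠ u} => (i : Fin n))
        (fun j : {j : Fin n // j ≠ v} => (j : Fin n)) =
      Matrix.of fun (i : {i : Fin n // i ≠ u}) (j : {j : Fin n // j ≠ v}) =>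
        A i j - A i v * (A u v)⁻¹ * A u j) ∧
    Module.finrank ℝ (LinearMap.ker (Matrix.mulVecLin
      (A.submatrix (fun i : {i : Fin n // i ≠ u} => (i : Fin n))
        (fun j : {j : Fin n // j ≠ v} => (j : Fin n))))) =
      Module.finrank ℝ (LinearMap.ker (Matrix.mulVecLin A)) :=
  delete_row_col_eq_schur_general D u v hout A hQ0 hAuu hAuv
end

section
/- Let A be a real n×n matrix and suppose x, y ∈ ℝⁿ satisfy xᵀA = 0 and Ay = 0, with supp(x) ∩ supp(y) = ∅ and A_{i,j} = 0 for all i ∈ supp(x), j ∈ supp(y), and x ≠ 0, y ≠ 0. Then A does not satisfy the ASAP. -/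
open Matrix

theorem untouching_supports_no_asap {n : ℕ} (A : Matrix (Fin n) (Fin n) ℝ)
    (x y : Fin n → ℝ) (hx : x ᵥ* A = 0) (hy : A *ᵥ y = 0)
    (hsupp : ∀ i, ¬ (x i ≠ 0 ∧ y i ≠ 0))
    (hzero : ∀ i j, x i ≠ 0 → y j ≠ 0 → A i j = 0)
    (hx0 : x ≠ 0) (hy0 : y ≠ 0) :
    ¬ (∀ X : Matrix (Fin n) (Fin n) ℝ, X ⊙ A = 0 → Xᵀ * A = 0 → A * Xᵀ = 0 → X = 0) := by
  intro h
  obtain ⟨i, hi⟩ := Function.ne_iff.mp hx0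
  obtain ⟨j, hj⟩ := Function.ne_iff.mp hy0
  have hX := h (vecMulVec x y)
  have h1 : vecMulVec x y ⊙ A = 0 := by
    ext a b
    simp only [Matrix.hadamard_apply, vecMulVec_apply, Matrix.zero_apply]
    by_cases ha : x a = 0
    · simp [ha]
    by_cases hb : y b = 0
    · simp [hb]
    · rw [hzero a b ha hb]; ring
  have h2 : (vecMulVec x y)ᵀ * A = 0 := by
    ext a b
    simp only [Matrix.mul_apply, transpose_apply, vecMulVec_apply, Matrix.zero_apply]
    have : ∑ k, x k * y a * A k b = y a * ∑ k, x k * A k b := by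
      rw [Finset.mul_sum]; congr 1; ext k; ring
    rw [this]
    have := congrFun hx b
    simp [vecMul, dotProduct] at this
    rw [this]; ring
  have h3 : A * (vecMulVec x y)ᵀ = 0 := by
    ext a b
    simp only [Matrix.mul_apply, transpose_apply, vecMulVec_apply, Matrix.zero_apply]
    have : ∑ k, A a k * (x b * y k) = x b * ∑ k, A a k * y k := by
      rw [Finset.mul_sum]; congr 1; ext k; ring
    rw [this]
    have := congrFun hy a
    simp [mulVec, dotProduct] at this
    rw [this]; ring
  have := congrFun (congrFun (hX h1 h2 h3) i) j
  simp [vecMulVec_apply] at this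
  rcases this with h | h
  · exact hi (by simpa using h)
  · exact hj (by simpa using h)
end
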